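/- arXiv:1608.04820 — 4 statements merged into one kernel-verified Lean document; each statement's English description precedes it below -/
import Mathlib

section
/- Let {u_{N,l}} and {v_{N,l}} (0 ≤ l ≤ N−1, N ≥ 1) be real triangular arrays with b' ≥ u_{N,0} ≥ u_{N,1} ≥ … ≥ u_{N,N−1} ≥ a' and b' ≥ v_{N,0} ≥ v_{N,1} ≥ … ≥ v_{N,N−1} ≥ a' for all N. Let g : [c,d] → ℝ (with c < d) be continuous and non-constant, and let [a,b] be the smallest closed interval containing both [a',b'] and the range of g. Assume: (i) lim_{N→∞} u_{N,0} = lim_{N→∞} v_{N,0} = max_{x∈[c,d]} g(x); (ii) lim_{N→∞} u_{N,N−1} = lim_{N→∞} v_{N,N−1} = min_{x∈[c,d]} g(x); (iii) for every continuous ϑ : [a,b] → ℝ, lim_{N→∞} (1/N)·∑_{l=0}^{N−1} ϑ(u_{N,l}) = (1/(d−c))·∫_c^d ϑ(g(x)) dx. Then the following are equivalent: (1) for every continuous ϑ : [a,b] → ℝ, lim_{N→∞} (1/N)·∑_{l=0}^{N−1} (ϑ(u_{N,l}) − ϑ(v_{N,l})) = 0; (2) lim_{N→∞} max_{0≤l≤N−1}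 |u_{N,l} − v_{N,l}| = 0. -/
/-!
Uniform continuity of `ϑ` on `[a, b]` gives (2) ⇒ (1). Conversely, (1) makes `v` distributed as
`g` as well. If `u N l ≥ v N l + 3h`, pick a grid point `p ∈ [v N l, v N l + h]`: by monotonicity
the ramp from `p + h` to `p + 2h` takes the value `1` at the first `l + 1` entries of `u`, while the
ramp from `p` to `p + h` vanishes at all but the first `l` entries of `v`. In the limit, however,
the mean of the second ramp over `v` exceeds that of the first over `u` by a positive integral,
because `p + h` lies in the range of `g`. The extreme entries confine `p` to a bounded window, so
only finitely many grid points need to be controlled at once.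
-/

open MeasureTheory Filter Finset Topology

noncomputable section

def ramp (p h t : ℝ) : ℝ := max 0 (min 1 ((t - p) / h))

namespace ramp

lemma nonneg (p h t : ℝ) : 0 ≤ ramp p h t := le_max_left _ _

lemma le_one (p h t : ℝ) : ramp p h t ≤ 1 := max_le zero_le_one (min_le_left _ _)

lemma eq_zero {p h t : ℝ} (hh : 0 ≤ h) (ht : t ≤ p) : ramp p h t = 0 :=
  max_eq_left <| (min_le_right _ _).trans <| div_nonpos_of_nonpos_of_nonneg (by linarith) hh

lemma eq_one {p h t : ℝ} (hh : 0 < h) (ht : p + h ≤ t) : ramp p h t = 1 := by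
  have : 1 ≤ (t - p) / h := (one_le_div hh).2 (by linarith)
  rw [ramp, min_eq_left this, max_eq_right zero_le_one]

lemma antitone_left {h : ℝ} (hh : 0 ≤ h) (t : ℝ) : Antitone fun p => ramp p h t :=
  fun _ _ hpq => max_le_max le_rfl <| min_le_min le_rfl <|
    div_le_div_of_nonneg_right (by linarith) hh

lemma continuous (p h : ℝ) : Continuous (ramp p h) := by
  unfold ramp; fun_prop

end ramp

section Counting

variable {N : ℕ} {w : Fin N → ℝ} {p h : ℝ}

lemma add_one_le_sum_ramp (hw : Antitone w) (hh : 0 < h) {l : Fin N} (hl : p + h ≤ w l) :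
    (l + 1 : ℝ) ≤ ∑ j, ramp p h (w j) :=
  calc (l + 1 : ℝ) = ∑ j ∈ Iic l, ramp p h (w j) := by
        rw [sum_congr rfl fun j hj => ramp.eq_one hh (hl.trans (hw (mem_Iic.mp hj)))]
        simp
    _ ≤ ∑ j, ramp p h (w j) :=
        sum_le_sum_of_subset_of_nonneg (subset_univ _) fun j _ _ => ramp.nonneg _ _ _

lemma sum_ramp_le (hw : Antitone w) (hh : 0 ≤ h) {l : Fin N} (hl : w l ≤ p) :
    ∑ j, ramp p h (w j) ≤ l :=
  calc ∑ j, ramp p h (w j) = ∑ j ∈ Iio l, ramp p h (w j) := by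
        refine (sum_subset (subset_univ _) fun j _ hj => ramp.eq_zero hh ?_).symm
        exact (hw (not_lt.mp (by simpa using hj))).trans hl
    _ ≤ ∑ _j ∈ Iio l, (1 : ℝ) := sum_le_sum fun j _ => ramp.le_one _ _ _
    _ = l := by simp

end Counting

lemma exists_mem_grid {lo hi h q : ℝ} (hh : 0 < h) (hq : q ∈ Set.Icc lo hi) :
    ∃ p ∈ (range (⌈(hi - lo) / h⌉₊ + 1)).image (fun i : ℕ => lo + i * h), q ≤ p ∧ p ≤ q + h := by
  set i := ⌈(q - lo) / h⌉₊
  have hqi : q - lo ≤ i * h := (div_le_iff₀ hh).mp (Nat.le_ceil _)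
  have hiq : i * h < q - lo + h := by
    have := mul_lt_mul_of_pos_right (Nat.ceil_lt_add_one (div_nonneg (sub_nonneg.2 hq.1) hh.le)) hh
    rwa [add_mul, div_mul_cancel₀ _ hh.ne', one_mul] at this
  have hi : i < ⌈(hi - lo) / h⌉₊ + 1 :=
    Nat.lt_succ_of_le <| Nat.ceil_mono <| div_le_div_of_nonneg_right (by linarith [hq.2]) hh.le
  exact ⟨lo + i * h, mem_image_of_mem _ (mem_range.2 hi), by linarith, by linarith⟩

lemma eventually_of_eventually_succ {P : ℕ → Prop} (h : ∀ᶠ n in atTop, P (n + 1)) :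
    ∀ᶠ N in atTop, P N := by
  have := eventually_map.mpr h
  rwa [map_add_atTop_eq_nat] at this

lemma eventually_forall_lt_of_tendsto_head {w : (N : ℕ) → Fin N → ℝ} (hw : ∀ N, Antitone (w N))
    {y ε : ℝ} (hy : Tendsto (fun N : ℕ => w (N + 1) ⟨0, N.succ_pos⟩) atTop (𝓝 y)) (hε : 0 < ε) :
    ∀ᶠ N in atTop, ∀ j, w N j < y + ε :=
  eventually_of_eventually_succ <| (hy.eventually (gt_mem_nhds (lt_add_of_pos_right y hε))).mono
    fun _ hN j => (hw _ (Fin.zero_le j)).trans_lt hN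

lemma eventually_forall_gt_of_tendsto_last {w : (N : ℕ) → Fin N → ℝ} (hw : ∀ N, Antitone (w N))
    {y ε : ℝ} (hy : Tendsto (fun N : ℕ => w (N + 1) ⟨N, Nat.lt_succ_self N⟩) atTop (𝓝 y))
    (hε : 0 < ε) : ∀ᶠ N in atTop, ∀ j, y - ε < w N j :=
  eventually_of_eventually_succ <| (hy.eventually (lt_mem_nhds (sub_lt_self y hε))).mono
    fun _ hN j => hN.trans_le (hw _ (Fin.le_last j))

lemma integral_ramp_comp_lt {g : ℝ → ℝ} {c d p h : ℝ} (hcd : c < d)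
    (hg : ContinuousOn g (Set.Icc c d)) (hh : 0 < h) (hp : p + h ∈ g '' Set.Icc c d) :
    (∫ x in c..d, ramp (p + h) h (g x)) / (d - c) < (∫ x in c..d, ramp p h (g x)) / (d - c) := by
  obtain ⟨x₀, hx₀, hgx₀⟩ := hp
  refine div_lt_div_of_pos_right ?_ (sub_pos.2 hcd)
  refine intervalIntegral.integral_lt_integral_of_continuousOn_of_le_of_exists_lt hcd
    ((ramp.continuous _ _).comp_continuousOn hg) ((ramp.continuous _ _).comp_continuousOn hg)
    (fun x _ => ramp.antitone_left hh.le _ (by linarith)) ⟨x₀, hx₀, ?_⟩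
  rw [hgx₀, ramp.eq_zero hh.le le_rfl, ramp.eq_one hh le_rfl]
  exact zero_lt_one

def DistributedAs (w : (N : ℕ) → Fin N → ℝ) (g : ℝ → ℝ) (c d : ℝ) : Prop :=
  ∀ ϑ : ℝ → ℝ, Continuous ϑ → Tendsto (fun N : ℕ => (∑ l : Fin N, ϑ (w N l)) / N) atTop
    (𝓝 ((∫ x in c..d, ϑ (g x)) / (d - c)))

namespace DistributedAs

variable {w w' : (N : ℕ) → Fin N → ℝ} {g : ℝ → ℝ} {c d : ℝ}

lemma of_tendsto_mean_sub (hw : DistributedAs w g c d)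
    (hww' : ∀ ϑ : ℝ → ℝ, Continuous ϑ →
      Tendsto (fun N : ℕ => (∑ l : Fin N, (ϑ (w N l) - ϑ (w' N l))) / N) atTop (𝓝 0)) :
    DistributedAs w' g c d := fun ϑ hϑ => by
  simpa [sum_sub_distrib, sub_div] using (hw ϑ hϑ).sub (hww' ϑ hϑ)

theorem eventually_sub_lt (hw : DistributedAs w g c d) (hw' : DistributedAs w' g c d)
    (hw_anti : ∀ N, Antitone (w N)) (hw'_anti : ∀ N, Antitone (w' N))
    (hcd : c < d) (hg : ContinuousOn g (Set.Icc c d))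
    (hw_top : Tendsto (fun N : ℕ => w (N + 1) ⟨0, N.succ_pos⟩) atTop
      (𝓝 (sSup (g '' Set.Icc c d))))
    (hw'_bot : Tendsto (fun N : ℕ => w' (N + 1) ⟨N, Nat.lt_succ_self N⟩) atTop
      (𝓝 (sInf (g '' Set.Icc c d))))
    {ε : ℝ} (hε : 0 < ε) : ∀ᶠ N in atTop, ∀ l, w N l - w' N l < ε := by
  set m := sInf (g '' Set.Icc c d)
  set M := sSup (g '' Set.Icc c d)
  set h := ε / 3
  have hh : 0 < h := by positivity
  set grid := (range (⌈(M + h - (m - h)) / h⌉₊ + 1)).image (fun i : ℕ => m - h + i * h)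
  have hgrid : ∀ᶠ N in atTop, ∀ p ∈ grid, p + h ∈ g '' Set.Icc c d →
      (∑ l : Fin N, ramp (p + h) h (w N l)) / N < (∑ l : Fin N, ramp p h (w' N l)) / N := by
    refine (eventually_all_finset _).2 fun p _ => ?_
    by_cases hp : p + h ∈ g '' Set.Icc c d
    · exact ((hw _ (ramp.continuous _ _)).eventually_lt (hw' _ (ramp.continuous _ _))
        (integral_ramp_comp_lt hcd hg hh hp)).mono fun _ hN _ => hN
    · exact Eventually.of_forall fun _ hp' => absurd hp' hp
  filter_upwards [hgrid, eventually_forall_lt_of_tendsto_head hw_anti hw_top hh,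
    eventually_forall_gt_of_tendsto_last hw'_anti hw'_bot hh] with N hN htop hbot l
  by_contra! hl
  have hε3 : ε = 3 * h := by ring
  obtain ⟨p, hp, hqp, hpq⟩ :=
    exists_mem_grid (hi := M + h) hh (q := w' N l) ⟨(hbot l).le, by linarith [htop l]⟩
  have hmem : p + h ∈ g '' Set.Icc c d := by
    rw [hg.image_Icc hcd.le]
    constructor <;> linarith [htop l, hbot l]
  have hN0 : (0 : ℝ) < N := Nat.cast_pos.2 l.pos
  have hsum := (div_lt_div_iff_of_pos_right hN0).mp (hN p hp hmem)
  linarith [add_one_le_sum_ramp (hw_anti N) hh (p := p + h) (l := l) (by linarith [htop l]),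
    sum_ramp_le (hw'_anti N) hh.le hqp]

end DistributedAs

lemma abs_mean_le {N : ℕ} {f : Fin N → ℝ} {C : ℝ} (hC : 0 ≤ C) (hf : ∀ l, |f l| ≤ C) :
    |(∑ l, f l) / N| ≤ C := by
  rw [abs_div, Nat.abs_cast]
  refine div_le_of_le_mul₀ N.cast_nonneg hC ?_
  calc |∑ l, f l| ≤ ∑ l, |f l| := abs_sum_le_sum_abs _ _
    _ ≤ ∑ _l : Fin N, C := sum_le_sum fun l _ => hf l
    _ = C * N := by simp [mul_comm]

lemma tendsto_mean_sub_of_uniform {s : Set ℝ} (hs : IsCompact s) {ϑ : ℝ → ℝ}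
    (hϑ : ContinuousOn ϑ s) {u v : (N : ℕ) → Fin N → ℝ} (hu : ∀ N l, u N l ∈ s)
    (hv : ∀ N l, v N l ∈ s)
    (huv : ∀ ε > (0 : ℝ), ∃ N₀ : ℕ, ∀ N ≥ N₀, ∀ l : Fin N, |u N l - v N l| < ε) :
    Tendsto (fun N : ℕ => (∑ l : Fin N, (ϑ (u N l) - ϑ (v N l))) / N) atTop (𝓝 0) := by
  rw [Metric.tendsto_atTop]
  intro ε hε
  obtain ⟨δ, hδ, hϑδ⟩ := Metric.uniformContinuousOn_iff.mp
    (hs.uniformContinuousOn_of_continuous hϑ) (ε / 2) (half_pos hε)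
  obtain ⟨N₀, hN₀⟩ := huv δ hδ
  refine ⟨N₀, fun N hN => ?_⟩
  rw [Real.dist_eq, sub_zero]
  calc _ ≤ ε / 2 := abs_mean_le (half_pos hε).le fun l =>
          (hϑδ _ (hu N l) _ (hv N l) (hN₀ N hN l)).le
    _ < ε := half_lt_self hε

theorem equal_distribution_iff_individual_convergence_continuous_general
    (u v : (N : ℕ) → Fin N → ℝ) (a' b' : ℝ)
    (hu_mono : ∀ N : ℕ, ∀ i j : Fin N, i ≤ j → u N j ≤ u N i)
    (hv_mono : ∀ N : ℕ, ∀ i j : Fin N, i ≤ j → v N j ≤ v N i)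
    (hu_bdd : ∀ N : ℕ, ∀ l : Fin N, a' ≤ u N l ∧ u N l ≤ b')
    (hv_bdd : ∀ N : ℕ, ∀ l : Fin N, a' ≤ v N l ∧ v N l ≤ b')
    (c d : ℝ) (hcd : c < d) (g : ℝ → ℝ) (hg_cont : ContinuousOn g (Set.Icc c d))
    (a b : ℝ)
    (ha : a = min a' (sInf (g '' Set.Icc c d)))
    (hb : b = max b' (sSup (g '' Set.Icc c d)))
    -- (i) the largest entries of both arrays converge to `max_{x ∈ [c,d]} g(x)`
    (hu_top : Tendsto (fun N : ℕ => u (N + 1) ⟨0, N.succ_pos⟩) atTop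
      (nhds (sSup (g '' Set.Icc c d))))
    (hv_top : Tendsto (fun N : ℕ => v (N + 1) ⟨0, N.succ_pos⟩) atTop
      (nhds (sSup (g '' Set.Icc c d))))
    -- (ii) the smallest entries of both arrays converge to `min_{x ∈ [c,d]} g(x)`
    (hu_bot : Tendsto (fun N : ℕ => u (N + 1) ⟨N, Nat.lt_succ_self N⟩) atTop
      (nhds (sInf (g '' Set.Icc c d))))
    (hv_bot : Tendsto (fun N : ℕ => v (N + 1) ⟨N, Nat.lt_succ_self N⟩) atTop
      (nhds (sInf (g '' Set.Icc c d))))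
    -- (iii) the array `u` is distributed as `g`
    (hu_dist : ∀ ϑ : ℝ → ℝ, ContinuousOn ϑ (Set.Icc a b) →
      Tendsto (fun N : ℕ => (∑ l : Fin N, ϑ (u N l)) / N) atTop
        (nhds ((∫ x in c..d, ϑ (g x)) / (d - c)))) :
    -- equal distribution of `u` and `v` is equivalent to individual convergence
    ((∀ ϑ : ℝ → ℝ, ContinuousOn ϑ (Set.Icc a b) →
        Tendsto (fun N : ℕ => (∑ l : Fin N, (ϑ (u N l) - ϑ (v N l))) / N) atTop (nhds 0))
      ↔ (∀ ε > (0:ℝ), ∃ N₀ : ℕ, ∀ N ≥ N₀, ∀ l : Fin N, |u N l - v N l| < ε)) := by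
  have hu : DistributedAs u g c d := fun ϑ hϑ => hu_dist ϑ hϑ.continuousOn
  constructor
  · intro huv ε hε
    have hv : DistributedAs v g c d := hu.of_tendsto_mean_sub fun ϑ hϑ => huv ϑ hϑ.continuousOn
    obtain ⟨N₀, hN₀⟩ := eventually_atTop.mp <|
      (hu.eventually_sub_lt hv hu_mono hv_mono hcd hg_cont hu_top hv_bot hε).and
        (hv.eventually_sub_lt hu hv_mono hu_mono hcd hg_cont hv_top hu_bot hε)
    exact ⟨N₀, fun N hN l => abs_sub_lt_iff.2 ⟨(hN₀ N hN).1 l, (hN₀ N hN).2 l⟩⟩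
  · have hIcc {w : (N : ℕ) → Fin N → ℝ} (hw : ∀ N l, a' ≤ w N l ∧ w N l ≤ b') (N : ℕ) (l : Fin N) :
        w N l ∈ Set.Icc a b :=
      ⟨ha ▸ (min_le_left _ _).trans (hw N l).1, hb ▸ (hw N l).2.trans (le_max_left _ _)⟩
    exact fun huv ϑ hϑ =>
      tendsto_mean_sub_of_uniform isCompact_Icc hϑ (hIcc hu_bdd) (hIcc hv_bdd) huv

/-- Equal distribution implies individual asymptotic equivalence for decreasing triangular
arrays whose extreme entries converge to the extrema of a non-constant continuous
function `g`, and whose first array is distributed as `g`. -/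
theorem equal_distribution_iff_individual_convergence_continuous
    (u v : (N : ℕ) → Fin N → ℝ) (a' b' : ℝ)
    (hu_mono : ∀ N : ℕ, ∀ i j : Fin N, i ≤ j → u N j ≤ u N i)
    (hv_mono : ∀ N : ℕ, ∀ i j : Fin N, i ≤ j → v N j ≤ v N i)
    (hu_bdd : ∀ N : ℕ, ∀ l : Fin N, a' ≤ u N l ∧ u N l ≤ b')
    (hv_bdd : ∀ N : ℕ, ∀ l : Fin N, a' ≤ v N l ∧ v N l ≤ b')
    (c d : ℝ) (hcd : c < d) (g : ℝ → ℝ) (hg_cont : ContinuousOn g (Set.Icc c d))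
    (hg_nonconst : ∃ x ∈ Set.Icc c d, ∃ y ∈ Set.Icc c d, g x ≠ g y)
    (a b : ℝ)
    (ha : a = min a' (sInf (g '' Set.Icc c d)))
    (hb : b = max b' (sSup (g '' Set.Icc c d)))
    -- (i) the largest entries of both arrays converge to `max_{x ∈ [c,d]} g(x)`
    (hu_top : Tendsto (fun N : ℕ => u (N + 1) ⟨0, N.succ_pos⟩) atTop
      (nhds (sSup (g '' Set.Icc c d))))
    (hv_top : Tendsto (fun N : ℕ => v (N + 1) ⟨0, N.succ_pos⟩) atTop
      (nhds (sSup (g '' Set.Icc c d))))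
    -- (ii) the smallest entries of both arrays converge to `min_{x ∈ [c,d]} g(x)`
    (hu_bot : Tendsto (fun N : ℕ => u (N + 1) ⟨N, Nat.lt_succ_self N⟩) atTop
      (nhds (sInf (g '' Set.Icc c d))))
    (hv_bot : Tendsto (fun N : ℕ => v (N + 1) ⟨N, Nat.lt_succ_self N⟩) atTop
      (nhds (sInf (g '' Set.Icc c d))))
    -- (iii) the array `u` is distributed as `g`
    (hu_dist : ∀ ϑ : ℝ → ℝ, ContinuousOn ϑ (Set.Icc a b) →
      Tendsto (fun N : ℕ => (∑ l : Fin N, ϑ (u N l)) / N) atTop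
        (nhds ((∫ x in c..d, ϑ (g x)) / (d - c)))) :
    -- equal distribution of `u` and `v` is equivalent to individual convergence
    ((∀ ϑ : ℝ → ℝ, ContinuousOn ϑ (Set.Icc a b) →
        Tendsto (fun N : ℕ => (∑ l : Fin N, (ϑ (u N l) - ϑ (v N l))) / N) atTop (nhds 0))
      ↔ (∀ ε > (0:ℝ), ∃ N₀ : ℕ, ∀ N ≥ N₀, ∀ l : Fin N, |u N l - v N l| < ε)) :=
  equal_distribution_iff_individual_convergence_continuous_general u v a' b' hu_mono hv_mono hu_bdd
    hv_bdd c d hcd g hg_cont a b ha hb hu_top hv_top hu_bot hv_bot hu_dist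

end
end

section
/- Suppose ∑_{k∈ℤ} |h(k)|² < ∞. Then for each choice C_N ∈ {C̃_N, Ĉ_N, C̄_N}, lim_{N→∞} (1/N)·‖H_N − C_N‖_F² = 0, where ‖A‖_F² = ∑_{m,n} |A[m,n]|² is the squared Frobenius norm. -/
open MeasureTheory Filter Finset

noncomputable section

/-- The `N × N` Toeplitz matrix with entries `H[m,n] = h(m - n)`. -/
def toeplitzM (h : ℤ → ℂ) (N : ℕ) : Matrix (Fin N) (Fin N) ℂ :=
  fun m n => h (((m : ℕ) : ℤ) - ((n : ℕ) : ℤ))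

/-- The `N × N` circulant matrix with first row `c`, entries `C[m,n] = c[(n-m) mod N]`. -/
def circM {N : ℕ} (c : Fin N → ℂ) : Matrix (Fin N) (Fin N) ℂ :=
  fun m n => c (n - m)

/-- First row of the circulant approximation `C̃_N`. -/
def rowTilde (h : ℤ → ℂ) (N : ℕ) : Fin N → ℂ :=
  fun k => if (k : ℕ) = 0 then h 0
    else h (-((k : ℕ) : ℤ)) + h ((N : ℤ) - ((k : ℕ) : ℤ))

/-- First row of the circulant approximation `Ĉ_N`. -/
def rowHat (h : ℤ → ℂ) (N : ℕ) : Fin N → ℂ :=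
  fun k => if (k : ℕ) ≤ (N - 1) / 2 then h (-((k : ℕ) : ℤ))
    else if (N + 2) / 2 ≤ (k : ℕ) then h ((N : ℤ) - ((k : ℕ) : ℤ))
    else 0

/-- First row of the circulant approximation `C̄_N`. -/
def rowBar (h : ℤ → ℂ) (N : ℕ) : Fin N → ℂ :=
  fun k => (((N : ℂ) - ((k : ℕ) : ℂ)) * h (-((k : ℕ) : ℤ))
      + ((k : ℕ) : ℂ) * h ((N : ℤ) - ((k : ℕ) : ℤ))) / (N : ℂ)

/-- Squared Frobenius norm of a complex matrix. -/
def frobSq {N : ℕ} (A : Matrix (Fin N) (Fin N) ℂ) : ℝ :=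
  ∑ m : Fin N, ∑ n : Fin N, ‖A m n‖ ^ 2


def pabs (h : ℤ → ℂ) (j : ℕ) : ℝ := ‖h (j:ℤ)‖ ^ 2

def Gt (h : ℤ → ℂ) (N : ℕ) (d : ℤ) : ℝ := if d = 0 then 0 else pabs h (N - d.natAbs)

lemma fin_sub_val_le {N : ℕ} (m n : Fin N) (hle : (m:ℕ) ≤ (n:ℕ)) :
    ((n - m : Fin N) : ℕ) = (n:ℕ) - (m:ℕ) := by
  have hm := m.isLt; have hn := n.isLt
  rw [Fin.sub_def]
  show ((N - (m:ℕ)) + (n:ℕ)) % N = (n:ℕ) - (m:ℕ)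
  have e : (N - (m:ℕ)) + (n:ℕ) = ((n:ℕ) - (m:ℕ)) + N := by omega
  rw [e, Nat.add_mod_right, Nat.mod_eq_of_lt (by omega)]

lemma fin_sub_val_gt {N : ℕ} (m n : Fin N) (hlt : (n:ℕ) < (m:ℕ)) :
    ((n - m : Fin N) : ℕ) = N - ((m:ℕ) - (n:ℕ)) := by
  have hm := m.isLt; have hn := n.isLt
  rw [Fin.sub_def]
  show ((N - (m:ℕ)) + (n:ℕ)) % N = N - ((m:ℕ) - (n:ℕ))
  rw [Nat.mod_eq_of_lt (by omega)]
  omega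

lemma entry_tilde (h : ℤ → ℂ) (hherm : ∀ k : ℤ, h (-k) = (starRingEnd ℂ) (h k))
    {N : ℕ} (m n : Fin N) :
    ‖(toeplitzM h N - circM (rowTilde h N)) m n‖ ^ 2
      ≤ Gt h N (((m:ℕ):ℤ) - ((n:ℕ):ℤ)) := by
  have ha := m.isLt; have hb := n.isLt
  have habs : ∀ x : ℤ, ‖h (-x)‖ = ‖h x‖ := fun x => by
    rw [hherm]; exact Complex.norm_conj _
  rcases le_or_gt (m:ℕ) (n:ℕ) with hle | hlt
  · have hk : ((n - m : Fin N) : ℕ) = (n:ℕ) - (m:ℕ) := fin_sub_val_le m n hle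
    by_cases h0 : (n:ℕ) = (m:ℕ)
    · have hd : ((m:ℕ):ℤ) - ((n:ℕ):ℤ) = 0 := by omega
      have hE : (toeplitzM h N - circM (rowTilde h N)) m n = 0 := by
        simp only [Matrix.sub_apply, toeplitzM, circM, rowTilde, hk, hd]
        rw [if_pos (by omega)]
        simp
      rw [hE, Gt, if_pos hd]
      simp
    · have hk0 : ((n - m : Fin N) : ℕ) ≠ 0 := by omega
      have hE : (toeplitzM h N - circM (rowTilde h N)) m n
          = -h ((N:ℤ) - (((n:ℕ) - (m:ℕ) : ℕ):ℤ)) := by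
        simp only [Matrix.sub_apply, toeplitzM, circM, rowTilde, hk]
        rw [if_neg (show ¬((n:ℕ) - (m:ℕ) = 0) from by omega)]
        have e1 : ((m:ℕ):ℤ) - ((n:ℕ):ℤ) = -((((n:ℕ) - (m:ℕ) : ℕ)):ℤ) := by omega
        rw [e1]
        ring
      rw [hE, Gt, if_neg (by omega), pabs, norm_neg]
      have e2 : (N:ℤ) - (((n:ℕ) - (m:ℕ) : ℕ):ℤ)
          = (((N - ((((m:ℕ):ℤ) - ((n:ℕ):ℤ)).natAbs) : ℕ)):ℤ) := by omega
      rw [e2]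
  · have hk : ((n - m : Fin N) : ℕ) = N - ((m:ℕ) - (n:ℕ)) := fin_sub_val_gt m n hlt
    have hk0 : ((n - m : Fin N) : ℕ) ≠ 0 := by omega
    have hE : (toeplitzM h N - circM (rowTilde h N)) m n
        = -h (-(((N - ((m:ℕ) - (n:ℕ)) : ℕ)):ℤ)) := by
      simp only [Matrix.sub_apply, toeplitzM, circM, rowTilde, hk]
      rw [if_neg (show ¬(N - ((m:ℕ) - (n:ℕ)) = 0) from by omega)]
      have e1 : (N:ℤ) - (((N - ((m:ℕ) - (n:ℕ)) : ℕ)):ℤ) = ((m:ℕ):ℤ) - ((n:ℕ):ℤ) := by omega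
      rw [e1]
      ring
    rw [hE, Gt, if_neg (by omega), pabs, norm_neg, habs]
    have e2 : ((N - ((((m:ℕ):ℤ) - ((n:ℕ):ℤ)).natAbs) : ℕ):ℤ)
        = (((N - ((m:ℕ) - (n:ℕ)) : ℕ)):ℤ) := by omega
    rw [e2]

def Gh (h : ℤ → ℂ) (N : ℕ) (d : ℤ) : ℝ :=
  if N ≤ 2 * d.natAbs ∧ d ≠ 0 then 2 * (pabs h d.natAbs + pabs h (N - d.natAbs)) else 0

def Gb (h : ℤ → ℂ) (N : ℕ) (d : ℤ) : ℝ :=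
  ((d.natAbs : ℝ) / N) ^ 2 * (2 * (pabs h d.natAbs + pabs h (N - d.natAbs)))

lemma pabs_nonneg (h : ℤ → ℂ) (j : ℕ) : 0 ≤ pabs h j := sq_nonneg _

lemma Gh_nonneg (h : ℤ → ℂ) (N : ℕ) (d : ℤ) : 0 ≤ Gh h N d := by
  unfold Gh
  split
  · have := pabs_nonneg h d.natAbs; have := pabs_nonneg h (N - d.natAbs); linarith
  · exact le_refl 0

lemma abs_sub_sq_le (a b : ℂ) :
    ‖a - b‖ ^ 2 ≤ 2 * (‖a‖ ^ 2 + ‖b‖ ^ 2) := by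
  have h1 : ‖a - b‖ ≤ ‖a‖ + ‖b‖ := by
    simpa using norm_sub_le a b
  have h2 : (0:ℝ) ≤ ‖a - b‖ := norm_nonneg _
  nlinarith [norm_nonneg a, norm_nonneg b,
    sq_nonneg (‖a‖ - ‖b‖), sq_nonneg (‖a‖ + ‖b‖)]

lemma entry_hat (h : ℤ → ℂ) (hherm : ∀ k : ℤ, h (-k) = (starRingEnd ℂ) (h k))
    {N : ℕ} (m n : Fin N) :
    ‖(toeplitzM h N - circM (rowHat h N)) m n‖ ^ 2
      ≤ Gh h N (((m:ℕ):ℤ) - ((n:ℕ):ℤ)) := by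
  have ha := m.isLt; have hb := n.isLt
  have habs : ∀ x : ℤ, ‖h (-x)‖ = ‖h x‖ := fun x => by
    rw [hherm]; exact Complex.norm_conj _
  rcases le_or_gt (m:ℕ) (n:ℕ) with hle | hlt
  · have hk : ((n - m : Fin N) : ℕ) = (n:ℕ) - (m:ℕ) := fin_sub_val_le m n hle
    by_cases hc1 : (n:ℕ) - (m:ℕ) ≤ (N - 1) / 2
    · have hE : (toeplitzM h N - circM (rowHat h N)) m n = 0 := by
        simp only [Matrix.sub_apply, toeplitzM, circM, rowHat, hk]
        rw [if_pos hc1]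
        have e1 : ((m:ℕ):ℤ) - ((n:ℕ):ℤ) = -((((n:ℕ) - (m:ℕ) : ℕ)):ℤ) := by omega
        rw [e1, sub_self]
      rw [hE]
      simpa using Gh_nonneg h N _
    · have hcond : N ≤ 2 * ((((m:ℕ):ℤ) - ((n:ℕ):ℤ)).natAbs) ∧ (((m:ℕ):ℤ) - ((n:ℕ):ℤ)) ≠ 0 := by
        constructor <;> omega
      have hnab : (((m:ℕ):ℤ) - ((n:ℕ):ℤ)).natAbs = (n:ℕ) - (m:ℕ) := by omega
      rw [Gh, if_pos hcond, hnab]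
      by_cases hc2 : (N + 2) / 2 ≤ (n:ℕ) - (m:ℕ)
      · have hE : (toeplitzM h N - circM (rowHat h N)) m n
            = h (-((((n:ℕ) - (m:ℕ) : ℕ)):ℤ)) - h ((N:ℤ) - (((n:ℕ) - (m:ℕ) : ℕ):ℤ)) := by
          simp only [Matrix.sub_apply, toeplitzM, circM, rowHat, hk]
          rw [if_neg hc1, if_pos hc2]
          have e1 : ((m:ℕ):ℤ) - ((n:ℕ):ℤ) = -((((n:ℕ) - (m:ℕ) : ℕ)):ℤ) := by omega
          rw [e1]
        rw [hE]
        refine le_trans (abs_sub_sq_le _ _) ?_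
        rw [habs]
        have e2 : (N:ℤ) - (((n:ℕ) - (m:ℕ) : ℕ):ℤ) = ((N - ((n:ℕ) - (m:ℕ)) : ℕ):ℤ) := by omega
        rw [e2]
        exact le_refl _
      · have hE : (toeplitzM h N - circM (rowHat h N)) m n = h (-((((n:ℕ) - (m:ℕ) : ℕ)):ℤ)) := by
          simp only [Matrix.sub_apply, toeplitzM, circM, rowHat, hk]
          rw [if_neg hc1, if_neg hc2]
          have e1 : ((m:ℕ):ℤ) - ((n:ℕ):ℤ) = -((((n:ℕ) - (m:ℕ) : ℕ)):ℤ) := by omega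
          rw [e1, sub_zero]
        rw [hE, habs]
        have := pabs_nonneg h (N - ((n:ℕ) - (m:ℕ)))
        have e3 : ‖h ((((n:ℕ) - (m:ℕ) : ℕ)):ℤ)‖ ^ 2 = pabs h ((n:ℕ) - (m:ℕ)) := rfl
        rw [e3]
        linarith [pabs_nonneg h ((n:ℕ) - (m:ℕ))]
  · have hk : ((n - m : Fin N) : ℕ) = N - ((m:ℕ) - (n:ℕ)) := fin_sub_val_gt m n hlt
    by_cases hc2 : (N + 2) / 2 ≤ N - ((m:ℕ) - (n:ℕ))
    · have hE : (toeplitzM h N - circM (rowHat h N)) m n = 0 := by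
        simp only [Matrix.sub_apply, toeplitzM, circM, rowHat, hk]
        rw [if_neg (show ¬(N - ((m:ℕ) - (n:ℕ)) ≤ (N - 1) / 2) from by omega), if_pos hc2]
        have e1 : (N:ℤ) - ((N - ((m:ℕ) - (n:ℕ)) : ℕ):ℤ) = ((m:ℕ):ℤ) - ((n:ℕ):ℤ) := by omega
        rw [e1, sub_self]
      rw [hE]
      simpa using Gh_nonneg h N _
    · have hcond : N ≤ 2 * ((((m:ℕ):ℤ) - ((n:ℕ):ℤ)).natAbs) ∧ (((m:ℕ):ℤ) - ((n:ℕ):ℤ)) ≠ 0 := by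
        constructor <;> omega
      have hnab : (((m:ℕ):ℤ) - ((n:ℕ):ℤ)).natAbs = (m:ℕ) - (n:ℕ) := by omega
      rw [Gh, if_pos hcond, hnab]
      by_cases hc1 : N - ((m:ℕ) - (n:ℕ)) ≤ (N - 1) / 2
      · have hE : (toeplitzM h N - circM (rowHat h N)) m n
            = h ((((m:ℕ) - (n:ℕ) : ℕ)):ℤ) - h (-(((N - ((m:ℕ) - (n:ℕ)) : ℕ)):ℤ)) := by
          simp only [Matrix.sub_apply, toeplitzM, circM, rowHat, hk]
          rw [if_pos hc1]
          have e1 : ((m:ℕ):ℤ) - ((n:ℕ):ℤ) = ((((m:ℕ) - (n:ℕ) : ℕ)):ℤ) := by omega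
          rw [e1]
        rw [hE]
        refine le_trans (abs_sub_sq_le _ _) ?_
        rw [habs]
        exact le_refl _
      · have hE : (toeplitzM h N - circM (rowHat h N)) m n = h ((((m:ℕ) - (n:ℕ) : ℕ)):ℤ) := by
          simp only [Matrix.sub_apply, toeplitzM, circM, rowHat, hk]
          rw [if_neg hc1, if_neg hc2]
          have e1 : ((m:ℕ):ℤ) - ((n:ℕ):ℤ) = ((((m:ℕ) - (n:ℕ) : ℕ)):ℤ) := by omega
          rw [e1, sub_zero]
        rw [hE]
        have e3 : ‖h ((((m:ℕ) - (n:ℕ) : ℕ)):ℤ)‖ ^ 2 = pabs h ((m:ℕ) - (n:ℕ)) := rfl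
        rw [e3]
        linarith [pabs_nonneg h ((m:ℕ) - (n:ℕ)), pabs_nonneg h (N - ((m:ℕ) - (n:ℕ)))]

lemma entry_bar (h : ℤ → ℂ) (hherm : ∀ k : ℤ, h (-k) = (starRingEnd ℂ) (h k))
    {N : ℕ} (m n : Fin N) :
    ‖(toeplitzM h N - circM (rowBar h N)) m n‖ ^ 2
      ≤ Gb h N (((m:ℕ):ℤ) - ((n:ℕ):ℤ)) := by
  have ha := m.isLt; have hb := n.isLt
  have hN : 0 < N := lt_of_le_of_lt (Nat.zero_le _) ha
  have hNC : (N:ℂ) ≠ 0 := by exact_mod_cast Nat.pos_iff_ne_zero.mp hN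
  have hNR : (0:ℝ) < (N:ℝ) := by exact_mod_cast hN
  have habs : ∀ x : ℤ, ‖h (-x)‖ = ‖h x‖ := fun x => by
    rw [hherm]; exact Complex.norm_conj _
  rcases le_or_gt (m:ℕ) (n:ℕ) with hle | hlt
  · have hk : ((n - m : Fin N) : ℕ) = (n:ℕ) - (m:ℕ) := fin_sub_val_le m n hle
    set k : ℕ := (n:ℕ) - (m:ℕ) with hkdef
    have hE : (toeplitzM h N - circM (rowBar h N)) m n
        = ((k:ℂ) * (h (-((k:ℕ):ℤ)) - h ((N:ℤ) - ((k:ℕ):ℤ)))) / (N:ℂ) := by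
      simp only [Matrix.sub_apply, toeplitzM, circM, rowBar, hk]
      have e1 : ((m:ℕ):ℤ) - ((n:ℕ):ℤ) = -((k:ℕ):ℤ) := by omega
      rw [e1]
      field_simp
      ring
    have hnab : (((m:ℕ):ℤ) - ((n:ℕ):ℤ)).natAbs = k := by omega
    have hb1 : ‖h (-((k:ℕ):ℤ)) - h ((N:ℤ) - ((k:ℕ):ℤ))‖ ^ 2
        ≤ 2 * (pabs h k + pabs h (N - k)) := by
      refine le_trans (abs_sub_sq_le _ _) ?_
      rw [habs]
      have e2 : (N:ℤ) - ((k:ℕ):ℤ) = ((N - k : ℕ):ℤ) := by omega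
      rw [e2]
      exact le_refl _
    rw [hE, Gb, hnab, norm_div, norm_mul, Complex.norm_natCast, Complex.norm_natCast]
    have e4 : ((k:ℝ) * ‖h (-((k:ℕ):ℤ)) - h ((N:ℤ) - ((k:ℕ):ℤ))‖ / (N:ℝ))^2
        = ((k:ℝ)/(N:ℝ))^2 * ‖h (-((k:ℕ):ℤ)) - h ((N:ℤ) - ((k:ℕ):ℤ))‖^2 := by
      ring
    rw [e4]
    exact mul_le_mul_of_nonneg_left hb1 (by positivity)
  · have hk : ((n - m : Fin N) : ℕ) = N - ((m:ℕ) - (n:ℕ)) := fin_sub_val_gt m n hlt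
    set j : ℕ := (m:ℕ) - (n:ℕ) with hjdef
    have hj1 : 1 ≤ j := by omega
    have hjN : j < N := by omega
    have hE : (toeplitzM h N - circM (rowBar h N)) m n
        = ((j:ℂ) * (h ((j:ℕ):ℤ) - h (-((N - j : ℕ):ℤ)))) / (N:ℂ) := by
      simp only [Matrix.sub_apply, toeplitzM, circM, rowBar, hk]
      have e1 : ((m:ℕ):ℤ) - ((n:ℕ):ℤ) = ((j:ℕ):ℤ) := by omega
      have e2 : (N:ℤ) - ((N - j : ℕ):ℤ) = ((j:ℕ):ℤ) := by omega
      have e3 : -(((N - j : ℕ)):ℤ) = -((N:ℤ) - ((j:ℕ):ℤ)) := by omega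
      have e5 : ((N - j : ℕ):ℂ) = (N:ℂ) - (j:ℂ) := by
        push_cast [Nat.cast_sub (le_of_lt hjN)]
        ring
      rw [e1, e2, e3, e5]
      field_simp
      ring
    have hnab : (((m:ℕ):ℤ) - ((n:ℕ):ℤ)).natAbs = j := by omega
    have hb1 : ‖h ((j:ℕ):ℤ) - h (-((N - j : ℕ):ℤ))‖ ^ 2
        ≤ 2 * (pabs h j + pabs h (N - j)) := by
      refine le_trans (abs_sub_sq_le _ _) ?_
      rw [habs]
      exact le_refl _
    rw [hE, Gb, hnab, norm_div, norm_mul, Complex.norm_natCast, Complex.norm_natCast]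
    have e4 : ((j:ℝ) * ‖h ((j:ℕ):ℤ) - h (-((N - j : ℕ):ℤ))‖ / (N:ℝ))^2
        = ((j:ℝ)/(N:ℝ))^2 * ‖h ((j:ℕ):ℤ) - h (-((N - j : ℕ):ℤ))‖^2 := by
      ring
    rw [e4]
    exact mul_le_mul_of_nonneg_left hb1 (by positivity)

lemma sumG (G : ℤ → ℝ) (N : ℕ) :
    ∑ m ∈ range N, ∑ n ∈ range N, G ((m : ℤ) - (n : ℤ)) =
    (∑ j ∈ range N, ((N : ℝ) - (j : ℝ)) * (G j + G (-j))) - (N : ℝ) * G 0 := by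
  induction N with
  | zero => simp
  | succ N ih =>
    have hrow : ∑ n ∈ range N, G ((N : ℤ) - (n : ℤ)) = ∑ j ∈ range N, G ((j : ℤ) + 1) := by
      rw [← Finset.sum_range_reflect]
      exact Finset.sum_congr rfl fun j hj => by
        simp only [mem_range] at hj; congr 1; omega
    have hcol : ∑ m ∈ range N, G ((m : ℤ) - (N : ℤ)) = ∑ j ∈ range N, G (-((j : ℤ) + 1)) := by
      rw [← Finset.sum_range_reflect]
      exact Finset.sum_congr rfl fun j hj => by
        simp only [mem_range] at hj; congr 1; omega
    have hL : ∑ m ∈ range (N+1), ∑ n ∈ range (N+1), G ((m : ℤ) - (n : ℤ)) =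
        (∑ m ∈ range N, ∑ n ∈ range N, G ((m : ℤ) - (n : ℤ)))
          + (∑ j ∈ range N, G (-((j : ℤ) + 1)))
          + ((∑ j ∈ range N, G ((j : ℤ) + 1)) + G 0) := by
      simp only [Finset.sum_range_succ, Finset.sum_add_distrib, hcol, hrow, sub_self]
      ring
    have hR : ∑ j ∈ range (N+1), (((N:ℝ)+1) - (j:ℝ)) * (G j + G (-j)) =
        (∑ j ∈ range N, ((N : ℝ) - (j : ℝ)) * (G j + G (-j)))
          + ((∑ j ∈ range N, (G ((j:ℤ)+1) + G (-((j:ℤ)+1)))) + 2 * G 0) := by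
      have e1 : ∀ j ∈ range N, (((N:ℝ)+1) - (j:ℝ)) * (G j + G (-j))
          = ((N : ℝ) - (j : ℝ)) * (G j + G (-j)) + (G j + G (-j)) := fun j _ => by ring
      rw [Finset.sum_range_succ (fun j => (((N:ℝ)+1) - (j:ℝ)) * (G j + G (-j))),
        Finset.sum_congr rfl e1, Finset.sum_add_distrib]
      have e2 : ∑ j ∈ range (N+1), (G (j:ℤ) + G (-(j:ℤ)))
          = (∑ j ∈ range N, (G ((j:ℤ)+1) + G (-((j:ℤ)+1)))) + (G 0 + G 0) := by
        rw [Finset.sum_range_succ' (fun j => (G (j:ℤ) + G (-(j:ℤ))))]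
        push_cast [neg_zero]
        linarith
      have e3 : ∑ j ∈ range (N+1), (G (j:ℤ) + G (-(j:ℤ)))
          = (∑ j ∈ range N, (G (j:ℤ) + G (-(j:ℤ)))) + (G (N:ℤ) + G (-(N:ℤ))) := by
        rw [Finset.sum_range_succ]
      push_cast at e2 e3 ⊢
      linarith
    rw [Finset.sum_add_distrib] at hR
    push_cast [hL, hR, ih] at *
    linarith

lemma frob_le {N : ℕ} (D : Matrix (Fin N) (Fin N) ℂ) (G : ℤ → ℝ)
    (hsym : ∀ x, G (-x) = G x) (h0 : G 0 = 0)
    (hent : ∀ m n : Fin N, ‖D m n‖ ^ 2 ≤ G (((m:ℕ):ℤ) - ((n:ℕ):ℤ))) :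
    frobSq D ≤ 2 * ∑ j ∈ range N, ((N:ℝ) - (j:ℝ)) * G (j:ℤ) := by
  have inner : ∀ a : ℕ, ∑ n : Fin N, G ((a:ℤ) - ((n:ℕ):ℤ)) = ∑ n ∈ range N, G ((a:ℤ) - (n:ℤ)) :=
    fun a => Fin.sum_univ_eq_sum_range (fun b => G ((a:ℤ) - (b:ℤ))) N
  calc frobSq D ≤ ∑ m : Fin N, ∑ n : Fin N, G (((m:ℕ):ℤ) - ((n:ℕ):ℤ)) :=
        Finset.sum_le_sum fun m _ => Finset.sum_le_sum fun n _ => hent m n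
    _ = ∑ m : Fin N, ∑ n ∈ range N, G (((m:ℕ):ℤ) - (n:ℤ)) :=
        Finset.sum_congr rfl fun m _ => inner (m:ℕ)
    _ = ∑ m ∈ range N, ∑ n ∈ range N, G ((m:ℤ) - (n:ℤ)) :=
        Fin.sum_univ_eq_sum_range (fun a => ∑ n ∈ range N, G ((a:ℤ) - (n:ℤ))) N
    _ = (∑ j ∈ range N, ((N : ℝ) - (j : ℝ)) * (G j + G (-j))) - (N : ℝ) * G 0 := sumG G N
    _ = 2 * ∑ j ∈ range N, ((N:ℝ) - (j:ℝ)) * G (j:ℤ) := by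
        rw [h0, Finset.mul_sum]
        rw [Finset.sum_congr rfl (fun j _ => by rw [hsym] ; ring :
          ∀ j ∈ range N, ((N : ℝ) - (j : ℝ)) * (G j + G (-(j:ℤ))) = 2 * (((N:ℝ) - (j:ℝ)) * G (j:ℤ)))]
        ring

lemma reflect_sum (q : ℕ → ℝ) (N : ℕ) :
    ∑ j ∈ range N, (((N:ℝ) - (j:ℝ))/(N:ℝ)) * q (N - j) = ∑ i ∈ range (N+1), ((i:ℝ)/(N:ℝ)) * q i := by
  rw [Finset.sum_range_succ' (fun i => ((i:ℝ)/(N:ℝ)) * q i)]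
  simp only [Nat.cast_zero, zero_div, zero_mul, add_zero]
  rw [← Finset.sum_range_reflect (fun j => (((N:ℝ) - (j:ℝ))/(N:ℝ)) * q (N - j)) N]
  apply Finset.sum_congr rfl
  intro j hj
  simp only [Finset.mem_range] at hj
  have e1 : N - (N - 1 - j) = j + 1 := by omega
  have e2 : ((N:ℝ) - ((N - 1 - j : ℕ):ℝ)) = ((j:ℝ) + 1) := by
    have : (N - 1 - j : ℕ) + (j + 1) = N := by omega
    have := congrArg (fun x : ℕ => (x:ℝ)) this
    push_cast at this
    linarith
  rw [e1, e2]
  push_cast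
  ring

lemma sum_tail_le (p : ℕ → ℝ) (hp : ∀ i, 0 ≤ p i) (hs : Summable p) (c : ℕ)
    (s : Finset ℕ) (hsc : ∀ j ∈ s, c ≤ j) :
    ∑ j ∈ s, p j ≤ (∑' i, p i) - ∑ j ∈ Finset.range c, p j := by
  have hdisj : Disjoint (Finset.range c) s := by
    rw [Finset.disjoint_left]
    intro a ha has
    exact absurd (hsc a has) (by simp at ha; omega)
  have := Finset.sum_union hdisj (f := p)
  have hle : ∑ j ∈ Finset.range c ∪ s, p j ≤ ∑' i, p i :=
    Summable.sum_le_tsum _ (fun i _ => hp i) hs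
  linarith

lemma tail_tendsto (p : ℕ → ℝ) (hs : Summable p) :
    Tendsto (fun c : ℕ => (∑' i, p i) - ∑ j ∈ Finset.range c, p j) atTop (nhds 0) := by
  have := hs.hasSum.tendsto_sum_nat
  have h2 := (tendsto_const_nhds (x := ∑' i, p i) (f := atTop (α := ℕ))).sub this
  simpa using h2

lemma cesaro (p : ℕ → ℝ) (hp : ∀ i, 0 ≤ p i) (hs : Summable p) :
    Tendsto (fun N : ℕ => ∑ i ∈ Finset.range (N+1), ((i:ℝ)/(N:ℝ)) * p i) atTop (nhds 0) := by
  rw [Metric.tendsto_atTop]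
  intro ε hε
  -- choose M with tail < ε/2
  have htail := tail_tendsto p hs
  rw [Metric.tendsto_atTop] at htail
  obtain ⟨M, hM⟩ := htail (ε/2) (by linarith)
  have hMtail : (∑' i, p i) - ∑ j ∈ Finset.range M, p j < ε/2 := by
    have := hM M le_rfl
    rw [Real.dist_eq] at this
    have h0 : 0 ≤ (∑' i, p i) - ∑ j ∈ Finset.range M, p j := by
      have := Summable.sum_le_tsum (Finset.range M) (fun i _ => hp i) hs
      linarith
    rw [abs_of_nonneg (by linarith)] at this
    linarith
  set A : ℝ := ∑ i ∈ Finset.range M, (i:ℝ) * p i with hA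
  have hA0 : 0 ≤ A := Finset.sum_nonneg fun i _ => mul_nonneg (by positivity) (hp i)
  obtain ⟨N0, hN0⟩ := exists_nat_gt (2 * A / ε)
  refine ⟨max M N0 + 1, fun N hN => ?_⟩
  have hNM : M ≤ N := le_trans (le_trans (le_max_left _ _) (Nat.le_succ _)) hN
  have hN1 : (1:ℝ) ≤ N := by
    have : 1 ≤ N := le_trans (Nat.le_add_left 1 _) hN
    exact_mod_cast this
  have hNpos : (0:ℝ) < N := by linarith
  rw [Real.dist_eq, sub_zero, abs_of_nonneg (Finset.sum_nonneg fun i _ =>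
    mul_nonneg (by positivity) (hp i))]
  -- split
  have hsplit : Finset.range (N+1) = Finset.range M ∪ Finset.Ico M (N+1) := by
    simp only [Finset.range_eq_Ico]
    rw [Finset.Ico_union_Ico_eq_Ico (by omega) (by omega)]
  have hdisj : Disjoint (Finset.range M) (Finset.Ico M (N+1)) := by
    rw [Finset.disjoint_left]; intro a ha hb; simp at ha hb; omega
  rw [hsplit, Finset.sum_union hdisj]
  have hpart1 : ∑ i ∈ Finset.range M, ((i:ℝ)/(N:ℝ)) * p i < ε/2 := by
    have : ∑ i ∈ Finset.range M, ((i:ℝ)/(N:ℝ)) * p i = A / N := by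
      rw [Finset.sum_div]
      exact Finset.sum_congr rfl fun i _ => by ring
    rw [this]
    rw [div_lt_iff₀ hNpos]
    have hN0' : (2 * A / ε) < N := by
      have h1 : (N0 : ℝ) ≤ N := by
        exact_mod_cast le_trans (le_trans (le_max_right _ _) (Nat.le_succ _)) hN
      linarith
    have := (div_lt_iff₀ hε).mp hN0'
    linarith
  have hpart2 : ∑ i ∈ Finset.Ico M (N+1), ((i:ℝ)/(N:ℝ)) * p i ≤
      (∑' i, p i) - ∑ j ∈ Finset.range M, p j := by
    have hle : ∑ i ∈ Finset.Ico M (N+1), ((i:ℝ)/(N:ℝ)) * p i ≤ ∑ i ∈ Finset.Ico M (N+1), p i := by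
      apply Finset.sum_le_sum
      intro i hi
      simp only [Finset.mem_Ico] at hi
      have : (i:ℝ)/(N:ℝ) ≤ 1 := by
        rw [div_le_one hNpos]
        exact_mod_cast Nat.lt_succ_iff.mp hi.2
      nlinarith [hp i]
    exact le_trans hle (sum_tail_le p hp hs M _ (fun j hj => (Finset.mem_Ico.mp hj).1))
  linarith


lemma wbound (w a b : ℝ) (hw0 : 0 ≤ w) (hw1 : w ≤ 1) (ha : 0 ≤ a) (hb : 0 ≤ b) :
    w * (2*(a+b)) ≤ 2*a + 2*(w*b) := by nlinarith

lemma vbound (w v a b : ℝ) (hw0 : 0 ≤ w) (hw1 : w ≤ 1) (hv0 : 0 ≤ v) (hv1 : v ≤ 1)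
    (ha : 0 ≤ a) (hb : 0 ≤ b) :
    w * (v^2 * (2*(a+b))) ≤ 2*(v*a) + 2*(w*b) := by
  have h1 : v*v*w ≤ v := by nlinarith
  have hvv : v*v ≤ 1 := by nlinarith
  have h2 : v*v*w ≤ w := by nlinarith
  nlinarith [mul_le_mul_of_nonneg_right h1 ha, mul_le_mul_of_nonneg_right h2 hb]

lemma bound_tilde (h : ℤ → ℂ) (N : ℕ) (hN : 1 ≤ N) :
    (2 * ∑ j ∈ range N, ((N:ℝ) - (j:ℝ)) * Gt h N (j:ℤ)) / (N:ℝ)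
      ≤ 2 * ∑ i ∈ range (N+1), ((i:ℝ)/(N:ℝ)) * pabs h i := by
  have hNR : (0:ℝ) < N := by exact_mod_cast hN
  rw [mul_div_assoc, Finset.sum_div]
  rw [← reflect_sum (pabs h) N]
  have step : ∀ j ∈ range N, ((N:ℝ)-(j:ℝ)) * Gt h N (j:ℤ) / (N:ℝ)
      ≤ (((N:ℝ)-(j:ℝ))/(N:ℝ)) * pabs h (N - j) := by
    intro j hj
    simp only [Finset.mem_range] at hj
    by_cases h0 : j = 0
    · subst h0
      simp only [Gt, Nat.cast_zero, if_pos rfl]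
      have : (0:ℝ) ≤ (((N:ℝ)-(0:ℝ))/(N:ℝ)) * pabs h (N - 0) :=
        mul_nonneg (div_nonneg (by simp) (le_of_lt hNR)) (pabs_nonneg h _)
      simpa using this
    · have hGt : Gt h N (j:ℤ) = pabs h (N - j) := by
        rw [Gt, if_neg (by exact_mod_cast h0), Int.natAbs_natCast]
      rw [hGt]
      have : ((N:ℝ)-(j:ℝ)) * pabs h (N - j) / (N:ℝ)
          = (((N:ℝ)-(j:ℝ))/(N:ℝ)) * pabs h (N - j) := by ring
      rw [this]
  linarith [Finset.sum_le_sum step]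

lemma bound_hat (h : ℤ → ℂ) (hs : Summable (pabs h)) (N : ℕ) (hN : 1 ≤ N) :
    (2 * ∑ j ∈ range N, ((N:ℝ) - (j:ℝ)) * Gh h N (j:ℤ)) / (N:ℝ)
      ≤ 4 * ((∑' i, pabs h i) - ∑ i ∈ range ((N+1)/2), pabs h i)
        + 4 * ∑ i ∈ range (N+1), ((i:ℝ)/(N:ℝ)) * pabs h i := by
  have hNR : (0:ℝ) < N := by exact_mod_cast hN
  rw [mul_div_assoc, Finset.sum_div]
  have step : ∀ j ∈ range N, ((N:ℝ)-(j:ℝ)) * Gh h N (j:ℤ) / (N:ℝ)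
      ≤ 2*(if N ≤ 2*j then pabs h j else 0) + 2*((((N:ℝ)-(j:ℝ))/(N:ℝ)) * pabs h (N - j)) := by
    intro j hj
    simp only [Finset.mem_range] at hj
    have hw0 : 0 ≤ ((N:ℝ)-(j:ℝ))/(N:ℝ) := by
      apply div_nonneg _ (le_of_lt hNR)
      have : (j:ℝ) ≤ (N:ℝ) := by exact_mod_cast le_of_lt hj
      linarith
    have hw1 : ((N:ℝ)-(j:ℝ))/(N:ℝ) ≤ 1 := by
      rw [div_le_one hNR]
      have : (0:ℝ) ≤ (j:ℝ) := Nat.cast_nonneg j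
      linarith
    have hGh : Gh h N (j:ℤ) = if N ≤ 2*j ∧ j ≠ 0 then 2*(pabs h j + pabs h (N - j)) else 0 := by
      simp only [Gh, Int.natAbs_natCast, ne_eq, Nat.cast_eq_zero]
    rw [hGh]
    by_cases hc : N ≤ 2*j ∧ j ≠ 0
    · rw [if_pos hc, if_pos hc.1]
      have e : ((N:ℝ)-(j:ℝ)) * (2*(pabs h j + pabs h (N - j))) / (N:ℝ)
          = (((N:ℝ)-(j:ℝ))/(N:ℝ)) * (2*(pabs h j + pabs h (N - j))) := by ring
      rw [e]
      exact wbound _ _ _ hw0 hw1 (pabs_nonneg h j) (pabs_nonneg h (N - j))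
    · rw [if_neg hc]
      have h1 : (0:ℝ) ≤ if N ≤ 2*j then pabs h j else 0 := by
        split
        · exact pabs_nonneg h j
        · exact le_refl 0
      have h2 : (0:ℝ) ≤ (((N:ℝ)-(j:ℝ))/(N:ℝ)) * pabs h (N - j) :=
        mul_nonneg hw0 (pabs_nonneg h _)
      simp only [mul_zero, zero_div]
      linarith
  have hsum := Finset.sum_le_sum step
  rw [Finset.sum_add_distrib, ← Finset.mul_sum, ← Finset.mul_sum, reflect_sum (pabs h) N] at hsum
  have htail : ∑ j ∈ range N, (if N ≤ 2*j then pabs h j else 0)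
      ≤ (∑' i, pabs h i) - ∑ i ∈ range ((N+1)/2), pabs h i := by
    rw [← Finset.sum_filter]
    exact sum_tail_le (pabs h) (pabs_nonneg h) hs ((N+1)/2) _
      (fun j hj => by simp only [Finset.mem_filter] at hj; omega)
  linarith

lemma bound_bar (h : ℤ → ℂ) (N : ℕ) (hN : 1 ≤ N) :
    (2 * ∑ j ∈ range N, ((N:ℝ) - (j:ℝ)) * Gb h N (j:ℤ)) / (N:ℝ)
      ≤ 8 * ∑ i ∈ range (N+1), ((i:ℝ)/(N:ℝ)) * pabs h i := by
  have hNR : (0:ℝ) < N := by exact_mod_cast hN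
  rw [mul_div_assoc, Finset.sum_div]
  have step : ∀ j ∈ range N, ((N:ℝ)-(j:ℝ)) * Gb h N (j:ℤ) / (N:ℝ)
      ≤ 2*(((j:ℝ)/(N:ℝ)) * pabs h j) + 2*((((N:ℝ)-(j:ℝ))/(N:ℝ)) * pabs h (N - j)) := by
    intro j hj
    simp only [Finset.mem_range] at hj
    have hjN : (j:ℝ) ≤ (N:ℝ) := by exact_mod_cast le_of_lt hj
    have hw0 : 0 ≤ ((N:ℝ)-(j:ℝ))/(N:ℝ) := div_nonneg (by linarith) (le_of_lt hNR)
    have hw1 : ((N:ℝ)-(j:ℝ))/(N:ℝ) ≤ 1 := by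
      rw [div_le_one hNR]
      have : (0:ℝ) ≤ (j:ℝ) := Nat.cast_nonneg j
      linarith
    have hv0 : 0 ≤ (j:ℝ)/(N:ℝ) := by positivity
    have hv1 : (j:ℝ)/(N:ℝ) ≤ 1 := by rw [div_le_one hNR]; exact hjN
    have hGb : Gb h N (j:ℤ) = ((j:ℝ)/(N:ℝ))^2 * (2*(pabs h j + pabs h (N - j))) := by
      simp only [Gb, Int.natAbs_natCast]
    rw [hGb]
    have e : ((N:ℝ)-(j:ℝ)) * (((j:ℝ)/(N:ℝ))^2 * (2*(pabs h j + pabs h (N - j)))) / (N:ℝ)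
        = (((N:ℝ)-(j:ℝ))/(N:ℝ)) * (((j:ℝ)/(N:ℝ))^2 * (2*(pabs h j + pabs h (N - j)))) := by ring
    rw [e]
    exact vbound _ _ _ _ hw0 hw1 hv0 hv1 (pabs_nonneg h j) (pabs_nonneg h (N - j))
  have hsum := Finset.sum_le_sum step
  rw [Finset.sum_add_distrib, ← Finset.mul_sum, ← Finset.mul_sum, reflect_sum (pabs h) N] at hsum
  have hmono : ∑ j ∈ range N, ((j:ℝ)/(N:ℝ)) * pabs h j
      ≤ ∑ i ∈ range (N+1), ((i:ℝ)/(N:ℝ)) * pabs h i := by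
    apply Finset.sum_le_sum_of_subset_of_nonneg (Finset.range_subset_range.mpr (Nat.le_succ N))
    intro i _ _
    exact mul_nonneg (by positivity) (pabs_nonneg h i)
  linarith

/-- If `∑_{k ∈ ℤ} |h(k)|² < ∞`, then `(1/N) ‖H_N - C_N‖_F² → 0` for each of the three
circulant approximations `C̃_N`, `Ĉ_N`, `C̄_N`. -/
theorem frobenius_asymptotic_equivalence
    (h : ℤ → ℂ) (hherm : ∀ k : ℤ, h (-k) = (starRingEnd ℂ) (h k))
    (hsq : Summable fun k : ℤ => ‖h k‖ ^ 2) :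
    Tendsto (fun N : ℕ => frobSq (toeplitzM h N - circM (rowTilde h N)) / N)
      atTop (nhds 0) ∧
    Tendsto (fun N : ℕ => frobSq (toeplitzM h N - circM (rowHat h N)) / N)
      atTop (nhds 0) ∧
    Tendsto (fun N : ℕ => frobSq (toeplitzM h N - circM (rowBar h N)) / N)
      atTop (nhds 0) := by
  have hsum : Summable (pabs h) := hsq.comp_injective (fun a b hab => by exact_mod_cast hab)
  have hS1 : Tendsto (fun N : ℕ => ∑ i ∈ Finset.range (N+1), ((i:ℝ)/(N:ℝ)) * pabs h i)
      atTop (nhds 0) := cesaro (pabs h) (pabs_nonneg h) hsum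
  have hhalf : Tendsto (fun N : ℕ => (N+1)/2) atTop atTop :=
    tendsto_atTop_atTop.mpr fun b => ⟨2*b, fun a ha => by omega⟩
  have hT : Tendsto (fun N : ℕ => (∑' i, pabs h i) - ∑ i ∈ Finset.range ((N+1)/2), pabs h i)
      atTop (nhds 0) := (tail_tendsto (pabs h) hsum).comp hhalf
  have hfrob0 : ∀ (N : ℕ) (A : Matrix (Fin N) (Fin N) ℂ), 0 ≤ frobSq A := fun N A =>
    Finset.sum_nonneg fun m _ => Finset.sum_nonneg fun n _ => sq_nonneg _
  have hGtsymm : ∀ N : ℕ, ∀ x : ℤ, Gt h N (-x) = Gt h N x := fun N x => by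
    simp [Gt, Int.natAbs_neg, neg_eq_zero]
  have hGhsymm : ∀ N : ℕ, ∀ x : ℤ, Gh h N (-x) = Gh h N x := fun N x => by
    simp [Gh, Int.natAbs_neg, neg_eq_zero]
  have hGbsymm : ∀ N : ℕ, ∀ x : ℤ, Gb h N (-x) = Gb h N x := fun N x => by
    simp [Gb, Int.natAbs_neg]
  have hGt0 : ∀ N : ℕ, Gt h N 0 = 0 := fun N => if_pos rfl
  have hGh0 : ∀ N : ℕ, Gh h N 0 = 0 := fun N => by simp [Gh]
  have hGb0 : ∀ N : ℕ, Gb h N 0 = 0 := fun N => by simp [Gb]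
  refine ⟨?_, ?_, ?_⟩
  · apply squeeze_zero'
      (g := fun N : ℕ => 2 * ∑ i ∈ Finset.range (N+1), ((i:ℝ)/(N:ℝ)) * pabs h i)
    · exact Filter.Eventually.of_forall fun N => div_nonneg (hfrob0 N _) (Nat.cast_nonneg N)
    · filter_upwards [eventually_ge_atTop 1] with N hN
      have hNR : (0:ℝ) < N := by exact_mod_cast hN
      refine le_trans ?_ (bound_tilde h N hN)
      exact (div_le_div_iff_of_pos_right hNR).mpr
        (frob_le _ (Gt h N) (hGtsymm N) (hGt0 N) (entry_tilde h hherm))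
    · simpa using hS1.const_mul (2:ℝ)
  · apply squeeze_zero'
      (g := fun N : ℕ => 4 * ((∑' i, pabs h i) - ∑ i ∈ Finset.range ((N+1)/2), pabs h i)
        + 4 * ∑ i ∈ Finset.range (N+1), ((i:ℝ)/(N:ℝ)) * pabs h i)
    · exact Filter.Eventually.of_forall fun N => div_nonneg (hfrob0 N _) (Nat.cast_nonneg N)
    · filter_upwards [eventually_ge_atTop 1] with N hN
      have hNR : (0:ℝ) < N := by exact_mod_cast hN
      refine le_trans ?_ (bound_hat h hsum N hN)
      exact (div_le_div_iff_of_pos_right hNR).mpr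
        (frob_le _ (Gh h N) (hGhsymm N) (hGh0 N) (entry_hat h hherm))
    · simpa using (hT.const_mul (4:ℝ)).add (hS1.const_mul (4:ℝ))
  · apply squeeze_zero'
      (g := fun N : ℕ => 8 * ∑ i ∈ Finset.range (N+1), ((i:ℝ)/(N:ℝ)) * pabs h i)
    · exact Filter.Eventually.of_forall fun N => div_nonneg (hfrob0 N _) (Nat.cast_nonneg N)
    · filter_upwards [eventually_ge_atTop 1] with N hN
      have hNR : (0:ℝ) < N := by exact_mod_cast hN
      refine le_trans ?_ (bound_bar h N hN)
      exact (div_le_div_iff_of_pos_right hNR).mpr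
        (frob_le _ (Gb h N) (hGbsymm N) (hGb0 N) (entry_bar h hherm))
    · simpa using hS1.const_mul (8:ℝ)

end
end

section
/- Let g : [c,d] → ℝ (with c < d) be continuous. Then F_g is strictly increasing on the interior of the range of g: for every α in the interior of the range of g there exists ε > 0 such that for every pair (α₁, α₂) satisfying min_{x∈[c,d]} g(x) ≤ α − ε < α₁ < α < α₂ < α + ε ≤ max_{x∈[c,d]} g(x), one has F_g(α₁) < F_g(α) < F_g(α₂). -/
open MeasureTheory

noncomputable section

/-- The normalized distribution function `F_g(α) = μ{x ∈ [c,d] : g(x) ≤ α} / (d - c)`. -/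
def Fdist (g : ℝ → ℝ) (c d : ℝ) (α : ℝ) : ℝ :=
  (volume {x ∈ Set.Icc c d | g x ≤ α}).toReal / (d - c)

/-!
Between two levels `β₁ < β₂` that `g` crosses, continuity makes `β₁ < g < β₂` on a relatively
open subset of `[c,d]`. Since `(c,d)` is dense in `[c,d]`, that subset contains a nonempty open
interval, so the sublevel set at `β₂` exceeds the one at `β₁` by a set of positive measure.
-/

open Set

theorem measure_lt_measure_of_subset {α : Type*} [MeasurableSpace α] {μ : Measure α}
    {s t : Set α} (hst : s ⊆ t) (hs : NullMeasurableSet s μ) (hs_fin : μ s ≠ ⊤)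
    (hpos : 0 < μ (t \ s)) : μ s < μ t :=
  calc μ s < μ s + μ (t \ s) := ENNReal.lt_add_right hs_fin hpos.ne'
    _ = μ t := by rw [measure_add_sdiff hs, union_eq_self_of_subset_left hst]

theorem volume_Icc_inter_preimage_pos {g : ℝ → ℝ} {c d : ℝ} (hcd : c < d)
    (hg : ContinuousOn g (Icc c d)) {t : Set ℝ} (ht : IsOpen t)
    (hne : (g '' Icc c d ∩ t).Nonempty) : 0 < volume (Icc c d ∩ g ⁻¹' t) := by
  have hclosure : g '' Icc c d ⊆ closure (g '' Ioo c d) := by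
    rw [← closure_Ioo hcd.ne] at hg ⊢
    exact hg.image_closure
  obtain ⟨_, hxt, x, hx, rfl⟩ :=
    mem_closure_iff.mp (hclosure hne.some_mem.1) t ht hne.some_mem.2
  have hopen : IsOpen (Ioo c d ∩ g ⁻¹' t) :=
    (hg.mono Ioo_subset_Icc_self).isOpen_inter_preimage isOpen_Ioo ht
  calc 0 < volume (Ioo c d ∩ g ⁻¹' t) := hopen.measure_pos volume ⟨x, hx, hxt⟩
    _ ≤ volume (Icc c d ∩ g ⁻¹' t) := by gcongr; exact Ioo_subset_Icc_self

theorem Fdist_lt_Fdist_of_image_inter_Ioo_nonempty {g : ℝ → ℝ} {c d β₁ β₂ : ℝ} (hcd : c < d)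
    (hg : ContinuousOn g (Icc c d)) (hne : (g '' Icc c d ∩ Ioo β₁ β₂).Nonempty) :
    Fdist g c d β₁ < Fdist g c d β₂ := by
  have hβ : β₁ < β₂ := nonempty_Ioo.mp (hne.mono inter_subset_right)
  have hclosed : IsClosed (Icc c d ∩ g ⁻¹' Iic β₁) :=
    hg.preimage_isClosed_of_isClosed isClosed_Icc isClosed_Iic
  have hsub : {x ∈ Icc c d | g x ≤ β₁} ⊆ {x ∈ Icc c d | g x ≤ β₂} :=
    fun x hx => ⟨hx.1, hx.2.trans hβ.le⟩
  have hfin : ∀ β, volume {x ∈ Icc c d | g x ≤ β} ≠ ⊤ := fun β =>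
    measure_ne_top_of_subset (fun x hx => hx.1) measure_Icc_lt_top.ne
  have hgap : Icc c d ∩ g ⁻¹' Ioo β₁ β₂ ⊆
      {x ∈ Icc c d | g x ≤ β₂} \ {x ∈ Icc c d | g x ≤ β₁} :=
    fun x hx => ⟨⟨hx.1, hx.2.2.le⟩, fun h => (h.2.trans_lt hx.2.1).false⟩
  have hlt := measure_lt_measure_of_subset hsub hclosed.measurableSet.nullMeasurableSet (hfin β₁)
    ((volume_Icc_inter_preimage_pos hcd hg isOpen_Ioo hne).trans_le (measure_mono hgap))
  exact div_lt_div_of_pos_right (ENNReal.toReal_strict_mono (hfin β₂) hlt) (sub_pos.mpr hcd)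

theorem Fdist_lt_Fdist {g : ℝ → ℝ} {c d β₁ β₂ : ℝ} (hcd : c < d)
    (hg : ContinuousOn g (Icc c d)) (h₁ : sInf (g '' Icc c d) < β₁) (hβ : β₁ < β₂)
    (h₂ : β₂ ≤ sSup (g '' Icc c d)) : Fdist g c d β₁ < Fdist g c d β₂ := by
  refine Fdist_lt_Fdist_of_image_inter_Ioo_nonempty hcd hg ⟨(β₁ + β₂) / 2, ?_, ?_, ?_⟩
  · rw [hg.image_Icc hcd.le]
    constructor <;> linarith
  all_goals linarith

/-- For a continuous `g : [c,d] → ℝ`, the distribution function `F_g` is strictly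
increasing on the interior of the range of `g`. -/
theorem Fdist_strictly_increasing_of_continuous
    (c d : ℝ) (hcd : c < d) (g : ℝ → ℝ) (hg : ContinuousOn g (Set.Icc c d)) :
    ∀ α ∈ interior (g '' Set.Icc c d), ∃ ε > (0:ℝ), ∀ α₁ α₂ : ℝ,
      sInf (g '' Set.Icc c d) ≤ α - ε → α - ε < α₁ → α₁ < α → α < α₂ → α₂ < α + ε →
      α + ε ≤ sSup (g '' Set.Icc c d) →
      Fdist g c d α₁ < Fdist g c d α ∧ Fdist g c d α < Fdist g c d α₂ := by
  intro α _
  refine ⟨1, one_pos, fun α₁ α₂ hinf hα₁ hα₁α hαα₂ hα₂ hsup => ⟨?_, ?_⟩⟩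
  · exact Fdist_lt_Fdist hcd hg (by linarith) hα₁α (by linarith)
  · exact Fdist_lt_Fdist hcd hg (by linarith) hαα₂ (by linarith)

end
end

section
/- For every N ≥ 1, ∫₀^{1/N} |D_N(f)|² df ≥ 0.45·N. -/
/-!
On the main lobe `0 < f < 1/N` we have `0 < sin (π f) ≤ π f`, so
`D_N(f)² ≥ (N sinc (π N f))²`, and the substitution `u = N f` turns the integral of the
right-hand side into `N ∫₀¹ sinc (π u)² du`. Writing `sinc t ² = (1 - cos 2t) / (2 t²)` and
bounding `cos` from above by its Taylor polynomial of degree 16 bounds `sinc (π u)²` from below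
by an explicit even polynomial, whose integral over `[0, 1]` is `0.4513…` (the exact value is
`Si(2π)/π = 0.4514…`). The alternating Taylor bounds for `sin` and `cos` on `[0, ∞)` follow by
integrating `cos ≤ 1` from `0` repeatedly.
-/

open MeasureTheory Real Finset Nat

namespace Real

noncomputable def cosTaylor (n : ℕ) (x : ℝ) : ℝ :=
  ∑ k ∈ range n, (-1) ^ k * x ^ (2 * k) / (2 * k)!

noncomputable def sinTaylor (n : ℕ) (x : ℝ) : ℝ :=
  ∑ k ∈ range n, (-1) ^ k * x ^ (2 * k + 1) / (2 * k + 1)!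

theorem hasDerivAt_sinTaylor (n : ℕ) (x : ℝ) : HasDerivAt (sinTaylor n) (cosTaylor n x) x := by
  unfold sinTaylor cosTaylor
  refine (HasDerivAt.fun_sum fun k _ => ((hasDerivAt_pow (2 * k + 1) x).const_mul _).div_const _)
    |>.congr_deriv (sum_congr rfl fun k _ => ?_)
  rw [factorial_succ]
  push_cast
  field_simp

theorem cosTaylor_succ (n : ℕ) (x : ℝ) :
    cosTaylor (n + 1) x = 1 - ∑ k ∈ range n, (-1) ^ k * x ^ (2 * k + 2) / (2 * k + 2)! := by
  rw [cosTaylor, sum_range_succ']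
  simp only [mul_zero, pow_zero, factorial_zero, cast_one, div_one, one_mul, pow_succ, mul_add]
  rw [sub_eq_neg_add, ← sum_neg_distrib]
  congr 1
  refine sum_congr rfl fun k _ => ?_
  ring

theorem hasDerivAt_cosTaylor_succ (n : ℕ) (x : ℝ) :
    HasDerivAt (cosTaylor (n + 1)) (-sinTaylor n x) x := by
  have : cosTaylor (n + 1) =
      fun x : ℝ => 1 - ∑ k ∈ range n, (-1) ^ k * x ^ (2 * k + 2) / (2 * k + 2)! :=
    funext (cosTaylor_succ n)
  rw [this, sinTaylor]
  refine ((hasDerivAt_const x 1).sub (HasDerivAt.fun_sum fun k _ =>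
    ((hasDerivAt_pow (2 * k + 2) x).const_mul ((-1 : ℝ) ^ k)).div_const
      ((2 * k + 2)! : ℝ))).congr_deriv ?_
  rw [zero_sub, neg_inj]
  refine sum_congr rfl fun k _ => ?_
  rw [show 2 * k + 2 = (2 * k + 1) + 1 by ring, factorial_succ]
  push_cast
  field_simp

theorem nonneg_of_hasDerivAt_nonneg {f f' : ℝ → ℝ} (hf : ∀ x, HasDerivAt f (f' x) x)
    (h₀ : f 0 = 0) (hf' : ∀ x, 0 ≤ x → 0 ≤ f' x) {x : ℝ} (hx : 0 ≤ x) : 0 ≤ f x := by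
  have hmono : MonotoneOn f (Set.Ici 0) :=
    monotoneOn_of_hasDerivWithinAt_nonneg (convex_Ici 0)
      (fun y _ => (hf y).continuousAt.continuousWithinAt)
      (fun y _ => (hf y).hasDerivWithinAt)
      (fun y hy => hf' y (interior_subset hy))
  simpa [h₀] using hmono Set.self_mem_Ici hx hx

theorem sinTaylor_alternating_of_cosTaylor {n : ℕ}
    (h : ∀ x, 0 ≤ x → 0 ≤ (-1) ^ n * (cosTaylor (n + 1) x - cos x)) {x : ℝ}
    (hx : 0 ≤ x) : 0 ≤ (-1) ^ n * (sinTaylor (n + 1) x - sin x) :=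
  nonneg_of_hasDerivAt_nonneg
    (fun y => ((hasDerivAt_sinTaylor (n + 1) y).sub (hasDerivAt_sin y)).const_mul _)
    (by simp [sinTaylor]) h hx

theorem cosTaylor_alternating (n : ℕ) {x : ℝ} (hx : 0 ≤ x) :
    0 ≤ (-1) ^ n * (cosTaylor (n + 1) x - cos x) := by
  induction n generalizing x with
  | zero => simpa [cosTaylor] using cos_le_one x
  | succ n ih =>
    refine nonneg_of_hasDerivAt_nonneg
      (fun y => ((hasDerivAt_cosTaylor_succ (n + 1) y).sub (hasDerivAt_cos y)).const_mul _)
      (by simp [cosTaylor_succ]) (fun y hy => ?_) hx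
    have := sinTaylor_alternating_of_cosTaylor (fun y hy => ih hy) hy
    linear_combination this

theorem cosTaylor_abs (n : ℕ) (x : ℝ) : cosTaylor n |x| = cosTaylor n x := by
  simp [cosTaylor, pow_mul]

theorem cos_le_cosTaylor (m : ℕ) (x : ℝ) : cos x ≤ cosTaylor (2 * m + 1) x := by
  rw [← cos_abs, ← cosTaylor_abs]
  simpa [pow_mul] using cosTaylor_alternating (2 * m) (abs_nonneg x)

theorem sum_le_sinc_sq (m : ℕ) (t : ℝ) :
    2 * ∑ k ∈ range (2 * m), (-1) ^ k * (2 * t) ^ (2 * k) / (2 * k + 2)! ≤ sinc t ^ 2 := by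
  rcases eq_or_ne t 0 with rfl | ht
  · rcases m with _ | m
    · simp
    · simp [sum_range_succ', mul_add]
  have hsum : ∑ k ∈ range (2 * m), (-1) ^ k * (2 * t) ^ (2 * k + 2) / (2 * k + 2)! =
      (2 * t) ^ 2 * ∑ k ∈ range (2 * m), (-1) ^ k * (2 * t) ^ (2 * k) / (2 * k + 2)! := by
    rw [mul_sum]
    exact sum_congr rfl fun k _ => by ring
  have hcos := cos_le_cosTaylor m (2 * t)
  rw [cosTaylor_succ, hsum] at hcos
  rw [sinc_of_ne_zero ht, div_pow, sin_sq_eq_half_sub, le_div_iff₀ (by positivity)]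
  linarith

theorem sum_le_integral_sinc_sq (m : ℕ) :
    2 * ∑ k ∈ range (2 * m), (-1) ^ k * (2 * π) ^ (2 * k) / ((2 * k + 2)! * (2 * k + 1)) ≤
      ∫ u in (0 : ℝ)..1, sinc (π * u) ^ 2 := by
  set p : ℕ → ℝ → ℝ := fun k u => (-1) ^ k * (2 * (π * u)) ^ (2 * k) / (2 * k + 2)!
  have hp (k : ℕ) : Continuous (p k) := by fun_prop
  have hterm (k : ℕ) : ∫ u in (0 : ℝ)..1, p k u =
      (-1) ^ k * (2 * π) ^ (2 * k) / ((2 * k + 2)! * (2 * k + 1)) := by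
    have : p k = fun u => (-1) ^ k * (2 * π) ^ (2 * k) / (2 * k + 2)! * u ^ (2 * k) := by
      funext u
      ring
    rw [this, intervalIntegral.integral_const_mul, integral_pow, one_pow,
      zero_pow (by omega), sub_zero]
    push_cast
    field_simp
  have hsinc : Continuous fun u => sinc (π * u) ^ 2 := by fun_prop
  calc _ = ∫ u in (0 : ℝ)..1, 2 * ∑ k ∈ range (2 * m), p k u := by
        rw [intervalIntegral.integral_const_mul,
          intervalIntegral.integral_finsetSum fun k _ => (hp k).intervalIntegrable _ _]
        simp_rw [hterm]
    _ ≤ _ := intervalIntegral.integral_mono_on zero_le_one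
        ((continuous_const.mul (continuous_finsetSum _ fun k _ => hp k)).intervalIntegrable _ _)
        (hsinc.intervalIntegrable _ _) fun u _ => sum_le_sinc_sq m (π * u)

theorem nine_twentieths_le_integral_sinc_sq :
    (0.45 : ℝ) ≤ ∫ u in (0 : ℝ)..1, sinc (π * u) ^ 2 := by
  refine le_trans ?_ (sum_le_integral_sinc_sq 4)
  norm_num [sum_range_succ, factorial, mul_pow]
  -- The coefficients of `π ^ (4 * j)` are positive and those of `π ^ (4 * j + 2)` negative.
  have lo : (3.141592 : ℝ) ≤ π := pi_gt_d6.le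
  have hi : π ≤ 3.141593 := pi_lt_d6.le
  have lo₀ : (0 : ℝ) ≤ 3.141592 := by norm_num
  have l4 := pow_le_pow_left₀ lo₀ lo 4
  have l8 := pow_le_pow_left₀ lo₀ lo 8
  have l12 := pow_le_pow_left₀ lo₀ lo 12
  have u2 := pow_le_pow_left₀ pi_nonneg hi 2
  have u6 := pow_le_pow_left₀ pi_nonneg hi 6
  have u10 := pow_le_pow_left₀ pi_nonneg hi 10
  have u14 := pow_le_pow_left₀ pi_nonneg hi 14
  linarith

theorem abs_sin_nat_mul_le (n : ℕ) (x : ℝ) : |sin (n * x)| ≤ n * |sin x| := by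
  induction n with
  | zero => simp
  | succ n ih =>
    calc |sin ((n + 1 : ℕ) * x)| = |sin (n * x) * cos x + cos (n * x) * sin x| := by
          push_cast
          rw [add_mul, one_mul, sin_add]
      _ ≤ |sin (n * x)| * |cos x| + |cos (n * x)| * |sin x| := by
          simpa only [abs_mul] using abs_add_le (sin (n * x) * cos x) (cos (n * x) * sin x)
      _ ≤ n * |sin x| * 1 + 1 * |sin x| := by
          gcongr
          exacts [abs_cos_le_one x, abs_cos_le_one _]
      _ = (n + 1 : ℕ) * |sin x| := by push_cast; ring

end Real

noncomputable def dirichletKernel (N : ℕ) (f : ℝ) : ℝ := sin (π * N * f) / sin (π * f)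

theorem dirichletKernel_sq_le (N : ℕ) (f : ℝ) : dirichletKernel N f ^ 2 ≤ N ^ 2 := by
  rw [dirichletKernel, div_pow]
  rcases eq_or_ne (sin (π * f)) 0 with h | h
  · simp [h]
  rw [div_le_iff₀ (by positivity), ← sq_abs, ← sq_abs (sin (π * f)), ← mul_pow]
  gcongr
  rw [show π * N * f = N * (π * f) by ring]
  exact abs_sin_nat_mul_le N (π * f)

theorem intervalIntegrable_dirichletKernel_sq (N : ℕ) (a b : ℝ) :
    IntervalIntegrable (fun f => dirichletKernel N f ^ 2) volume a b := by
  refine (intervalIntegrable_const (c := (N : ℝ) ^ 2)).mono_fun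
    (by unfold dirichletKernel; fun_prop : Measurable _).aestronglyMeasurable
    (Filter.Eventually.of_forall fun f => ?_)
  dsimp only
  rw [norm_of_nonneg (sq_nonneg _), norm_of_nonneg (sq_nonneg _)]
  exact dirichletKernel_sq_le N f

theorem mul_sinc_sq_le_dirichletKernel_sq (N : ℕ) {f : ℝ} (hf₀ : 0 < f) (hf₁ : f < 1) :
    (N * sinc (π * N * f)) ^ 2 ≤ dirichletKernel N f ^ 2 := by
  have hsin : 0 < sin (π * f) := sin_pos_of_pos_of_lt_pi (by positivity) (by nlinarith [pi_pos])
  have hmul : N * sinc (π * N * f) = sin (π * N * f) / (π * f) := by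
    rcases eq_or_ne (N : ℝ) 0 with hN | hN
    · simp [hN]
    rw [sinc_of_ne_zero (by positivity)]
    field_simp
  rw [hmul, dirichletKernel, div_pow, div_pow]
  gcongr
  exact sin_le (by positivity)

theorem integral_mul_sinc_sq {c : ℝ} (hc : c ≠ 0) :
    ∫ f in (0 : ℝ)..1 / c, (c * sinc (π * c * f)) ^ 2 =
      c * ∫ u in (0 : ℝ)..1, sinc (π * u) ^ 2 := by
  simp_rw [mul_pow, mul_assoc π c]
  rw [intervalIntegral.integral_const_mul,
    intervalIntegral.integral_comp_mul_left (fun u => sinc (π * u) ^ 2) hc,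
    mul_zero, mul_one_div_cancel hc, smul_eq_mul]
  field_simp

/-- The main lobe of the Dirichlet kernel `D_N(f) = sin(πNf)/sin(πf)` contains most of
its energy: `∫₀^{1/N} |D_N(f)|² df ≥ 0.45 N` for every `N ≥ 1`. -/
theorem dirichlet_kernel_mainlobe_energy (N : ℕ) (hN : 1 ≤ N) :
    0.45 * (N : ℝ)
      ≤ ∫ f in (0:ℝ)..(1 / (N : ℝ)),
          (Real.sin (Real.pi * N * f) / Real.sin (Real.pi * f)) ^ 2 := by
  have hN₀ : (N : ℝ) ≠ 0 := Nat.cast_ne_zero.2 (by omega)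
  have hN₁ : 1 / (N : ℝ) ≤ 1 := div_le_one_of_le₀ (by exact_mod_cast hN) (Nat.cast_nonneg N)
  calc 0.45 * (N : ℝ) ≤ N * ∫ u in (0 : ℝ)..1, sinc (π * u) ^ 2 := by
        rw [mul_comm]
        gcongr
        exact nine_twentieths_le_integral_sinc_sq
    _ = ∫ f in (0 : ℝ)..1 / N, (N * sinc (π * N * f)) ^ 2 := (integral_mul_sinc_sq hN₀).symm
    _ ≤ ∫ f in (0 : ℝ)..1 / N, dirichletKernel N f ^ 2 :=
        intervalIntegral.integral_mono_on_of_le_Ioo (by positivity)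
          ((by fun_prop : Continuous _).intervalIntegrable _ _)
          (intervalIntegrable_dirichletKernel_sq N _ _)
          fun f hf => mul_sinc_sq_le_dirichletKernel_sq N hf.1 (hf.2.trans_le hN₁)
end
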